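/- arXiv:2212.09350 — 3 statements merged into one kernel-verified Lean document; each statement's English description precedes it below -/
import Mathlib

section
/- Let G be a group, K_c ≤ G a subgroup, and let K_1,...,K_{l_1}, K_{l_1+1},...,K_{l_3} be subgroups containing K_c, where l_3 = l_1 + 1 + l_2 for some l_2. Consider the quotients Γ_1 = (G × K_1 × ... × K_{l_1})/K_c^{l_1+1}, Γ_2 = (G × K_{l_1+2} × ... × K_{l_3})/K_c^{l_2+1}, and Γ_3 = (G × K_1 × ... × K_{l_3})/K_c^{l_3+1} under the actions ((g_0,k_1,...,k_l),(h_0,...,h_l)) ↦ (g_0h_0, h_0^{-1}k_1h_1, ..., h_{l-1}^{-1}k_lh_l), with projections p_i sending [(g_0,k_1,...)] to the coset g_0 K in G/K for a fixed subgroup K containing all the K_i. Then the map Φ from the fiber product Γ_1 ×_{G/K} Γ_2 = {([(g_0,k_1,...,k_{l_1})], [(g̃_0, k̃_1,...,k̃_{l_2})]) : g_0 K = g̃_0 K} to Γ_3 given by Φ([(g_0,k_1,...,k_{l_1})],[(g̃_0,k̃_1,...,k̃_{l_2})]) = [(g_0, k_1, ..., k_{l_1}, (g_0 k_1 ⋯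 k_{l_1})^{-1} g̃_0, k̃_1, ..., k̃_{l_2})] is a well-defined bijection, with inverse Ψ([(g_0,k_1,...,k_{l_3})]) = ([(g_0,k_1,...,k_{l_1})], [(g_0 k_1 ⋯ k_{l_1} k_{l_1+1}, k_{l_1+2}, ..., k_{l_3})]). -/
/-!
A point of `Γ = (G × K₁ × ⋯ × K_l) / Kc^{l+1}` is determined by the `Kc`-cosets of its partial
products `g₀, g₀k₁, …, g₀k₁⋯k_l`: acting by `(h₀, …, h_l)` multiplies the `j`-th partial product
on the right by `h_j`, and conversely `h_j` is recovered as the quotient of the `j`-th partial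
products of two tuples with the same cosets. The partial products of a tuple for `Γ₃` are those of
its first `l₁` entries followed by those of the tuple for `Γ₂` that starts at `g₀k₁⋯k_{l₁+1}`.
Hence `Ψ` (`Gamma.split`) is well defined and injective, and `Φ` supplies preimages.
-/

/-- The orbit relation of the right action of `Kc^{l+1}` on
`W = G × K₁ × ⋯ × K_l`,
`(g₀, k₁, …, k_l)·(h₀, …, h_l) = (g₀h₀, h₀⁻¹k₁h₁, …, h_{l-1}⁻¹k_lh_l)`. -/
def gammaRel {G : Type*} [Group G] {l : ℕ} (Kc : Subgroup G)
    (Ks : Fin l → Subgroup G) (w w' : G × ∀ i, Ks i) : Prop :=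
  ∃ h : Fin (l + 1) → Kc,
    w'.1 = w.1 * (h 0 : G) ∧
    ∀ i, (w'.2 i : G) = ((h i.castSucc : G))⁻¹ * (w.2 i : G) * (h i.succ : G)

/-- The quotient `Γ = W / Kc^{l+1}` (Ziller's completing manifold, as a set). -/
def Gamma {G : Type*} [Group G] {l : ℕ} (Kc : Subgroup G)
    (Ks : Fin l → Subgroup G) :=
  Quot (gammaRel Kc Ks)

/-- The projection `Γ → G/K`, `[(g₀, k₁, …, k_l)] ↦ g₀K`. -/
def gammaProj {G : Type*} [Group G] {l : ℕ} (Kc K : Subgroup G) (hKcK : Kc ≤ K)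
    (Ks : Fin l → Subgroup G) : Gamma Kc Ks → G ⧸ K :=
  Quot.lift (fun w => (QuotientGroup.mk w.1 : G ⧸ K)) (by
    rintro w w' ⟨h, h1, -⟩
    try dsimp only
    rw [h1, eq_comm]
    exact QuotientGroup.mk_mul_of_mem w.1 (hKcK (h 0).2))

/-- Assembling a tuple for `Γ₃` out of a tuple for `Γ₁`, a middle element of `K`,
and a tuple for `Γ₂`. -/
def combineFun {G : Type*} [Group G] {l1 l2 : ℕ} (A : Fin l1 → Subgroup G)
    (K : Subgroup G) (B : Fin l2 → Subgroup G)
    (k1 : ∀ i, A i) (m : K) (k2 : ∀ i, B i) :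
    ∀ j : Fin (l1 + 1 + l2), ↥(Fin.append (Fin.snoc A K) B j) :=
  fun j => Fin.addCases (motive := fun j => ↥(Fin.append (Fin.snoc A K) B j))
    (fun j1 => Fin.lastCases
      (motive := fun j1 => ↥(Fin.append (Fin.snoc A K) B (Fin.castAdd l2 j1)))
      ⟨(m : G), by rw [Fin.append_left, Fin.snoc_last]; exact m.2⟩
      (fun i => ⟨(k1 i : G), by rw [Fin.append_left, Fin.snoc_castSucc]; exact (k1 i).2⟩)
      j1)
    (fun j2 => ⟨(k2 j2 : G), by rw [Fin.append_right]; exact (k2 j2).2⟩) j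

namespace Gamma

variable {G : Type*} [Group G]

section PartialProd

variable {l : ℕ} {Ks : Fin l → Subgroup G}

def partialProd (w : G × ∀ i, Ks i) (j : ℕ) : G :=
  w.1 * ((List.ofFn fun i => (w.2 i : G)).take j).prod

@[simp]
lemma partialProd_zero (w : G × ∀ i, Ks i) : partialProd w 0 = w.1 := by
  simp [partialProd]

lemma partialProd_succ (w : G × ∀ i, Ks i) {j : ℕ} (hj : j < l) :
    partialProd w (j + 1) = partialProd w j * w.2 ⟨j, hj⟩ := by
  rw [partialProd, partialProd, List.prod_take_succ _ _ (by simpa using hj), mul_assoc,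
    List.getElem_ofFn]

lemma partialProd_length (w : G × ∀ i, Ks i) :
    partialProd w l = w.1 * (List.ofFn fun i => (w.2 i : G)).prod := by
  rw [partialProd, List.take_of_length_le (by simp)]

lemma partialProd_add_eq {l' : ℕ} {Ks' : Fin l' → Subgroup G}
    {w : G × ∀ i, Ks i} {w' : G × ∀ i, Ks' i} {o : ℕ} (h₀ : partialProd w o = w'.1)
    (hw : ∀ i (hi : o + i < l) (hi' : i < l'), (w.2 ⟨o + i, hi⟩ : G) = w'.2 ⟨i, hi'⟩) :
    ∀ j, o + j ≤ l → j ≤ l' → partialProd w (o + j) = partialProd w' j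
  | 0, _, _ => by rw [partialProd_zero]; exact h₀
  | j + 1, hj, hj' => by
    rw [← add_assoc, partialProd_succ w (by omega), partialProd_succ w' (by omega),
      partialProd_add_eq h₀ hw j (by omega) (by omega), hw j (by omega) (by omega)]

lemma ofFn_prod_mem {K : Subgroup G} (hK : ∀ i, Ks i ≤ K) (k : ∀ i, Ks i) :
    (List.ofFn fun i => (k i : G)).prod ∈ K :=
  list_prod_mem fun _ hx => by
    obtain ⟨i, rfl⟩ := List.mem_ofFn.mp hx
    exact hK i (k i).2

end PartialProd

variable {l : ℕ} (Kc : Subgroup G) (Ks : Fin l → Subgroup G)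

theorem gammaRel_iff (w w' : G × ∀ i, Ks i) :
    gammaRel Kc Ks w w' ↔
      ∀ j ≤ l, ((partialProd w j : G) : G ⧸ Kc) = partialProd w' j := by
  constructor
  · rintro ⟨h, h₀, hstep⟩
    have key : ∀ j (hj : j ≤ l), partialProd w' j = partialProd w j * h ⟨j, by omega⟩ := by
      intro j
      induction j with
      | zero => intro; simpa [Fin.mk_zero] using h₀
      | succ j ih =>
        intro hj
        rw [partialProd_succ w (by omega), partialProd_succ w' (by omega), hstep,
          ih (by omega), Fin.castSucc_mk, Fin.succ_mk]
        group
    intro j hj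
    rw [key j hj, QuotientGroup.mk_mul_of_mem _ (h _).2]
  · intro H
    refine ⟨fun j => ⟨(partialProd w j)⁻¹ * partialProd w' j,
      QuotientGroup.eq.mp (H j (Nat.lt_succ_iff.mp j.isLt))⟩, ?_, fun i => ?_⟩
    · simp
    · simp only [Fin.val_castSucc, Fin.val_succ, partialProd_succ w i.isLt,
        partialProd_succ w' i.isLt]
      group

theorem equivalence_gammaRel : Equivalence (gammaRel Kc Ks) where
  refl w := (gammaRel_iff Kc Ks w w).mpr fun _ _ => rfl
  symm h := (gammaRel_iff Kc Ks _ _).mpr fun j hj => ((gammaRel_iff Kc Ks _ _).mp h j hj).symm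
  trans h h' := (gammaRel_iff Kc Ks _ _).mpr fun j hj =>
    ((gammaRel_iff Kc Ks _ _).mp h j hj).trans ((gammaRel_iff Kc Ks _ _).mp h' j hj)

theorem mk_eq_mk_iff {w w' : G × ∀ i, Ks i} :
    (Quot.mk _ w : Gamma Kc Ks) = Quot.mk _ w' ↔
      ∀ j ≤ l, ((partialProd w j : G) : G ⧸ Kc) = partialProd w' j :=
  ⟨fun h => (gammaRel_iff Kc Ks w w').mp
      ((equivalence_gammaRel Kc Ks).eqvGen_iff.mp (Quot.eqvGen_exact h)),
    fun h => Quot.sound ((gammaRel_iff Kc Ks w w').mpr h)⟩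

section Split

variable {l₁ l₂ : ℕ} {A : Fin l₁ → Subgroup G} {K : Subgroup G}
  {B : Fin l₂ → Subgroup G}

def leftPart (w : G × ∀ j, ↥(Fin.append (Fin.snoc A K) B j)) : G × ∀ i, A i :=
  (w.1, fun i => ⟨w.2 (Fin.castAdd l₂ i.castSucc), by
    simpa only [Fin.append_left, Fin.snoc_castSucc] using (w.2 (Fin.castAdd l₂ i.castSucc)).2⟩)

def rightPart (w : G × ∀ j, ↥(Fin.append (Fin.snoc A K) B j)) : G × ∀ i, B i :=
  (partialProd w (l₁ + 1), fun i => ⟨w.2 (Fin.natAdd (l₁ + 1) i), by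
    simpa only [Fin.append_right] using (w.2 (Fin.natAdd (l₁ + 1) i)).2⟩)

lemma partialProd_leftPart (w : G × ∀ j, ↥(Fin.append (Fin.snoc A K) B j)) {j : ℕ}
    (hj : j ≤ l₁) :
    partialProd (leftPart w) j = partialProd w j := by
  simpa using (partialProd_add_eq (w' := leftPart w) (o := 0) (partialProd_zero w)
    (fun i _ _ => by rw [Fin.mk.inj_iff.mpr (zero_add i)]; rfl) j (by omega) hj).symm

lemma partialProd_rightPart (w : G × ∀ j, ↥(Fin.append (Fin.snoc A K) B j)) {j : ℕ}
    (hj : j ≤ l₂) :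
    partialProd (rightPart w) j = partialProd w (l₁ + 1 + j) :=
  (partialProd_add_eq (w' := rightPart w) rfl (fun _ _ _ => rfl) j (by omega) hj).symm

lemma partialProd_succ_eq_leftPart_mul (w : G × ∀ j, ↥(Fin.append (Fin.snoc A K) B j)) :
    partialProd w (l₁ + 1) =
      partialProd (leftPart w) l₁ * w.2 (Fin.castAdd l₂ (Fin.last l₁)) := by
  rw [partialProd_succ w (by omega), partialProd_leftPart w le_rfl]
  rfl

theorem mk_eq_mk_iff_leftPart_rightPart {w w' : G × ∀ j, ↥(Fin.append (Fin.snoc A K) B j)} :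
    (Quot.mk _ w : Gamma Kc (Fin.append (Fin.snoc A K) B)) = Quot.mk _ w' ↔
      (Quot.mk _ (leftPart w) : Gamma Kc A) = Quot.mk _ (leftPart w') ∧
        (Quot.mk _ (rightPart w) : Gamma Kc B) = Quot.mk _ (rightPart w') := by
  simp only [mk_eq_mk_iff]
  constructor
  · intro H
    refine ⟨fun j hj => ?_, fun j hj => ?_⟩
    · rw [partialProd_leftPart w hj, partialProd_leftPart w' hj]
      exact H j (by omega)
    · rw [partialProd_rightPart w hj, partialProd_rightPart w' hj]
      exact H _ (by omega)
  · rintro ⟨H₁, H₂⟩ j hj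
    rcases le_or_gt j l₁ with hj₁ | hj₁
    · rw [← partialProd_leftPart w hj₁, ← partialProd_leftPart w' hj₁]
      exact H₁ j hj₁
    · obtain ⟨i, rfl⟩ : ∃ i, j = l₁ + 1 + i := ⟨j - (l₁ + 1), by omega⟩
      rw [← partialProd_rightPart w (by omega), ← partialProd_rightPart w' (by omega)]
      exact H₂ i (by omega)

lemma leftPart_combineFun (g : G) (k₁ : ∀ i, A i) (m : K) (k₂ : ∀ i, B i) :
    leftPart (g, combineFun A K B k₁ m k₂) = (g, k₁) := by
  refine Prod.ext rfl (funext fun i => Subtype.ext ?_)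
  simp only [leftPart, combineFun, Fin.addCases_left, Fin.lastCases_castSucc]

lemma rightPart_combineFun (g : G) (k₁ : ∀ i, A i) (m : K) (k₂ : ∀ i, B i) :
    rightPart (g, combineFun A K B k₁ m k₂) =
      (g * (List.ofFn fun i => (k₁ i : G)).prod * m, k₂) := by
  refine Prod.ext ?_ (funext fun i => Subtype.ext ?_)
  · rw [rightPart, partialProd_succ_eq_leftPart_mul, leftPart_combineFun, partialProd_length]
    simp only [combineFun, Fin.addCases_left, Fin.lastCases_last]
  · simp only [rightPart, combineFun, Fin.addCases_right]

variable (hKcK : Kc ≤ K) (hAK : ∀ i, A i ≤ K)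

include hAK in
lemma gammaProj_mk_leftPart (w : G × ∀ j, ↥(Fin.append (Fin.snoc A K) B j)) :
    gammaProj Kc K hKcK A (Quot.mk _ (leftPart w)) =
      gammaProj Kc K hKcK B (Quot.mk _ (rightPart w)) := by
  have hmid : (w.2 (Fin.castAdd l₂ (Fin.last l₁)) : G) ∈ K := by
    simpa only [Fin.append_left, Fin.snoc_last] using (w.2 (Fin.castAdd l₂ (Fin.last l₁))).2
  change ((leftPart w).1 : G ⧸ K) = (partialProd w (l₁ + 1) : G)
  rw [partialProd_succ_eq_leftPart_mul, partialProd_length, mul_assoc,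
    QuotientGroup.mk_mul_of_mem _ (K.mul_mem (ofFn_prod_mem hAK _) hmid)]

include hAK in
lemma inv_mul_mem_of_gammaProj_eq {w₁ : G × ∀ i, A i} {w₂ : G × ∀ i, B i}
    (hc : gammaProj Kc K hKcK A (Quot.mk _ w₁) = gammaProj Kc K hKcK B (Quot.mk _ w₂)) :
    (w₁.1 * (List.ofFn fun i => (w₁.2 i : G)).prod)⁻¹ * w₂.1 ∈ K := by
  rw [mul_inv_rev, mul_assoc]
  exact K.mul_mem (K.inv_mem (ofFn_prod_mem hAK _)) (QuotientGroup.eq.mp hc)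

def split :
    Gamma Kc (Fin.append (Fin.snoc A K) B) →
      {xy : Gamma Kc A × Gamma Kc B //
        gammaProj Kc K hKcK A xy.1 = gammaProj Kc K hKcK B xy.2} :=
  Quot.lift
    (fun w => ⟨(Quot.mk _ (leftPart w), Quot.mk _ (rightPart w)),
      gammaProj_mk_leftPart Kc hKcK hAK w⟩)
    (fun _ _ h => Subtype.ext (Prod.ext_iff.mpr
      (mk_eq_mk_iff_leftPart_rightPart Kc |>.mp (Quot.sound h))))

lemma split_mk_combineFun (w₁ : G × ∀ i, A i) (w₂ : G × ∀ i, B i) (m : K)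
    (hm : (m : G) = (w₁.1 * (List.ofFn fun i => (w₁.2 i : G)).prod)⁻¹ * w₂.1)
    (hc : gammaProj Kc K hKcK A (Quot.mk _ w₁) = gammaProj Kc K hKcK B (Quot.mk _ w₂)) :
    split Kc hKcK hAK (Quot.mk _ (w₁.1, combineFun A K B w₁.2 m w₂.2)) =
      ⟨(Quot.mk _ w₁, Quot.mk _ w₂), hc⟩ := by
  refine Subtype.ext (Prod.ext ?_ ?_)
  · exact congrArg (Quot.mk _) (leftPart_combineFun _ _ _ _)
  · refine congrArg (Quot.mk _) ((rightPart_combineFun _ _ _ _).trans (Prod.ext ?_ rfl))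
    rw [hm, mul_inv_cancel_left]

theorem split_bijective : Function.Bijective (split (B := B) Kc hKcK hAK) := by
  refine ⟨fun x y hxy => ?_, fun ⟨⟨x, y⟩, hc⟩ => ?_⟩
  · obtain ⟨w, rfl⟩ := Quot.exists_rep x
    obtain ⟨w', rfl⟩ := Quot.exists_rep y
    exact (mk_eq_mk_iff_leftPart_rightPart Kc).mpr (Prod.ext_iff.mp (congrArg Subtype.val hxy))
  · obtain ⟨w₁, rfl⟩ := Quot.exists_rep x
    obtain ⟨w₂, rfl⟩ := Quot.exists_rep y
    exact ⟨_, split_mk_combineFun Kc hKcK hAK w₁ w₂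
      ⟨_, inv_mul_mem_of_gammaProj_eq Kc hKcK hAK hc⟩ rfl hc⟩

end Split

end Gamma

/-- The map `Φ` from the fiber product `Γ₁ ×_{G/K} Γ₂` to `Γ₃`,
`Φ([(g₀,k₁,…,k_{l₁})],[(g̃₀,k̃₁,…,k̃_{l₂})])
  = [(g₀, k₁, …, k_{l₁}, (g₀k₁⋯k_{l₁})⁻¹g̃₀, k̃₁, …, k̃_{l₂})]`,
is a well-defined bijection. -/
theorem fiber_product_completing_manifolds_bijection {G : Type*} [Group G]
    {l1 l2 : ℕ} (Kc K : Subgroup G) (hKcK : Kc ≤ K)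
    (A : Fin l1 → Subgroup G) (B : Fin l2 → Subgroup G)
    (hAK : ∀ i, A i ≤ K) :
    ∃ Φ : {xy : Gamma Kc A × Gamma Kc B //
            gammaProj Kc K hKcK A xy.1 = gammaProj Kc K hKcK B xy.2} →
          Gamma Kc (Fin.append (Fin.snoc A K) B),
      Function.Bijective Φ ∧
      ∀ (w1 : G × ∀ i, A i) (w2 : G × ∀ i, B i)
        (hc : gammaProj Kc K hKcK A (Quot.mk _ w1)
            = gammaProj Kc K hKcK B (Quot.mk _ w2)),
        Φ ⟨(Quot.mk _ w1, Quot.mk _ w2), hc⟩ =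
          Quot.mk _ (w1.1, combineFun A K B w1.2
            ⟨(w1.1 * (List.ofFn fun i => (w1.2 i : G)).prod)⁻¹ * w2.1, by
              have hc' : (QuotientGroup.mk w1.1 : G ⧸ K) = QuotientGroup.mk w2.1 := hc
              have h1 : w1.1⁻¹ * w2.1 ∈ K := QuotientGroup.eq.mp hc'
              have h2 : (List.ofFn fun i => (w1.2 i : G)).prod ∈ K := by
                refine list_prod_mem ?_
                intro x hx
                obtain ⟨i, rfl⟩ := List.mem_ofFn.mp hx
                exact hAK i (w1.2 i).2
              have h3 := K.mul_mem (K.inv_mem h2) h1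
              have h4 : (w1.1 * (List.ofFn fun i => (w1.2 i : G)).prod)⁻¹ * w2.1
                  = ((List.ofFn fun i => (w1.2 i : G)).prod)⁻¹ * (w1.1⁻¹ * w2.1) := by
                group
              rw [h4]; exact h3⟩ w2.2) := by
  let Ψ := Equiv.ofBijective _ (Gamma.split_bijective Kc hKcK hAK (B := B))
  exact ⟨Ψ.symm, Ψ.symm.bijective, fun w1 w2 hc => Ψ.symm_apply_eq.mpr
    (Gamma.split_mk_combineFun Kc hKcK hAK w1 w2 _ rfl hc).symm⟩
end

section
/- Let G be a group with subgroup K_{c_1} and subgroups K̃_1, ..., K̃_r each containing K_{c_1}. Let 1 ≤ s_1 < ... < s_r ≤ l be indices, and define K_{1,i} = K̃_j if i = s_j and K_{1,i} = K_{c_1} otherwise. Consider W_{c_1} = G × K̃_1 × ... × K̃_r and W'_{c_1} = G × K_{1,1} × ... × K_{1,l} with the standard right actions of K_{c_1}^{r+1} and K_{c_1}^{l+1} respectively (as in the construction of Ziller cycles). Then the map ζ̃ : W'_{c_1} → W_{c_1}, (g_0, h_1, ..., h_l) ↦ (g_0, h_1 h_2 ⋯ h_{s_1}, h_{s_1+1}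 ⋯ h_{s_2}, ..., h_{s_{r-1}+1} ⋯ h_{s_r}) is well-defined (each grouped product lies in the corresponding K̃_j) and induces a bijection ζ : W'_{c_1}/K_{c_1}^{l+1} → W_{c_1}/K_{c_1}^{r+1}, with inverse induced by ξ̃(g_0, k̃_1, ..., k̃_r) = (g_0, h_1, ..., h_l) where h_i = k̃_j if i = s_j and h_i = e otherwise. -/
/-- Grouped ordered product: for `j`, the ordered product of the `h i` over
the indices `i` with `s_{j-1} < i ≤ s_j` (i.e. `i ≤ s j` and `s j' < i` for
all `j' < j`). -/
def groupedProd {G : Type*} [Monoid G] {l r : ℕ} (s : Fin r → Fin l)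
    (h : Fin l → G) (j : Fin r) : G :=
  (((List.finRange l).filter fun i =>
      decide ((∀ j', j' < j → s j' < i) ∧ i ≤ s j)).map h).prod

lemma List.prod_map_filter_eq_prod_map_ite {α M : Type*} [Monoid M] (p : α → Bool) (f : α → M)
    (L : List α) : ((L.filter p).map f).prod = (L.map fun x => if p x then f x else 1).prod := by
  induction L with
  | nil => rfl
  | cons x L ih => by_cases hx : p x <;> simp [hx, ih]

namespace Fin

variable {G : Type*} [Group G] {l : ℕ}

lemma partialProd_last_eq_prod_finRange {M : Type*} [Monoid M] (f : Fin l → M) :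
    partialProd f (last l) = ((List.finRange l).map f).prod := by
  simp [partialProd, List.ofFn_eq_map, List.take_of_length_le]

lemma prod_map_filter_finRange_Ico (h : Fin l → G) {a b : Fin (l + 1)} (hab : a ≤ b) :
    (((List.finRange l).filter fun i => decide (a ≤ i.castSucc ∧ i.castSucc < b)).map h).prod =
      (partialProd h a)⁻¹ * partialProd h b := by
  rw [List.prod_map_filter_eq_prod_map_ite, ← partialProd_last_eq_prod_finRange]
  suffices ∀ n, partialProd (fun i => if decide (a ≤ i.castSucc ∧ i.castSucc < b) then h i else 1) n
      = (partialProd h (min a n))⁻¹ * partialProd h (min b n) by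
    simpa [min_eq_left (le_last _)] using this (last l)
  intro n
  induction n using Fin.induction with
  | zero => simp
  | succ i ih =>
    rw [partialProd_succ, ih]
    have hi : i.castSucc < i.succ := castSucc_lt_succ
    rcases lt_or_ge i.castSucc a with hia | hai
    · have hia' : i.succ ≤ a := castSucc_lt_iff_succ_le.mp hia
      simp [hia, hia', hia'.trans hab, hia.le, hia.le.trans hab]
    rcases lt_or_ge i.castSucc b with hib | hbi
    · have hib' : i.succ ≤ b := castSucc_lt_iff_succ_le.mp hib
      simp [hai, hib, hai.trans hi.le, hib.le, hib', partialProd_succ, mul_assoc]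
    · simp [hbi.not_gt, hab.trans hbi, hab.trans (hbi.trans hi.le), hbi, hbi.trans hi.le]

lemma partialProd_of_eq_inv_mul_mul {h h' : Fin l → G} {k : Fin (l + 1) → G}
    (hk : ∀ i, h' i = (k i.castSucc)⁻¹ * h i * k i.succ) (n : Fin (l + 1)) :
    partialProd h' n = (k 0)⁻¹ * partialProd h n * k n := by
  induction n using Fin.induction with
  | zero => simp
  | succ i ih => rw [partialProd_succ, partialProd_succ, ih, hk]; group

end Fin

section Blocks

variable {l r : ℕ} (s : Fin r → Fin l)

/-- Block `j : Fin r` consists of the positions from `blockStart s j.castSucc` up to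
`blockStart s j.succ = s j + 1` (exclusive). The positions after the last mark form a block
`last r` that `groupedProd` ignores. -/
def blockStart : Fin (r + 1) → Fin (l + 1) :=
  Fin.cons 0 fun j => (s j).succ

def blockIdx (n : Fin (l + 1)) : Fin (r + 1) :=
  ⟨(Finset.univ.filter fun j => (s j).castSucc < n).card,
    Nat.lt_succ_of_le ((Finset.card_filter_le _ _).trans (Finset.card_fin r).le)⟩

@[simp] lemma blockStart_zero : blockStart s 0 = 0 := rfl

@[simp] lemma blockStart_succ (j : Fin r) : blockStart s j.succ = (s j).succ := rfl

@[simp] lemma blockIdx_zero : blockIdx s 0 = 0 := by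
  simp [blockIdx]

lemma blockIdx_succ_of_forall_ne {i : Fin l} (hi : ∀ j, s j ≠ i) :
    blockIdx s i.succ = blockIdx s i.castSucc := by
  simp only [blockIdx, Fin.mk.injEq]
  congr 1
  ext j
  simp [Fin.castSucc_lt_succ_iff, Fin.castSucc_lt_castSucc_iff, le_iff_lt_or_eq, hi j]

variable {s} (hs : StrictMono s)
include hs

lemma blockIdx_castSucc_apply (j : Fin r) : blockIdx s (s j).castSucc = j.castSucc := by
  simp only [blockIdx, Fin.castSucc_lt_castSucc_iff, hs.lt_iff_lt, Fin.ext_iff, Fin.val_castSucc]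
  simp [Finset.filter_gt_eq_Iio]

lemma blockIdx_succ_apply (j : Fin r) : blockIdx s (s j).succ = j.succ := by
  simp only [blockIdx, Fin.castSucc_lt_succ_iff, hs.le_iff_le, Fin.ext_iff, Fin.val_succ]
  simp [Finset.filter_ge_eq_Iic]

lemma forall_lt_apply_lt_iff_blockStart_le (j : Fin r) (i : Fin l) :
    (∀ j' < j, s j' < i) ↔ blockStart s j.castSucc ≤ i.castSucc := by
  rcases Fin.eq_zero_or_eq_succ j.castSucc with hj | ⟨m, hm⟩
  · have : (j : ℕ) = 0 := congrArg Fin.val hj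
    simp only [hj, blockStart_zero, Fin.zero_le, iff_true]
    intro j' hj'
    exact absurd hj' (by rw [Fin.lt_def]; omega)
  · have hmj : (m : ℕ) + 1 = j := (congrArg Fin.val hm).symm
    rw [hm, blockStart_succ, Fin.succ_le_castSucc_iff]
    refine ⟨fun H => H m (by rw [Fin.lt_def]; omega), fun H j' hj' => ?_⟩
    exact (hs.monotone (by rw [Fin.le_def]; rw [Fin.lt_def] at hj'; omega)).trans_lt H

lemma blockStart_castSucc_le_succ (j : Fin r) : blockStart s j.castSucc ≤ blockStart s j.succ :=
  ((forall_lt_apply_lt_iff_blockStart_le hs j (s j)).mp fun _ hj' => hs hj').trans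
    Fin.castSucc_lt_succ.le

lemma groupedProd_eq_inv_partialProd_mul {G : Type*} [Group G] (h : Fin l → G) (j : Fin r) :
    groupedProd s h j =
      (Fin.partialProd h (blockStart s j.castSucc))⁻¹ *
        Fin.partialProd h (blockStart s j.succ) := by
  rw [← Fin.prod_map_filter_finRange_Ico h (blockStart_castSucc_le_succ hs j)]
  simp only [groupedProd, forall_lt_apply_lt_iff_blockStart_le hs, blockStart_succ,
    Fin.castSucc_lt_succ_iff]

end Blocks

section BlockPrefix

variable {G : Type*} [Group G] {l r : ℕ} (s : Fin r → Fin l) (h : Fin l → G)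

def blockPrefix (n : Fin (l + 1)) : G :=
  (Fin.partialProd h (blockStart s (blockIdx s n)))⁻¹ * Fin.partialProd h n

@[simp] lemma blockPrefix_zero : blockPrefix s h 0 = 1 := by
  simp [blockPrefix]

lemma blockPrefix_succ_of_forall_ne {i : Fin l} (hi : ∀ j, s j ≠ i) :
    blockPrefix s h i.succ = blockPrefix s h i.castSucc * h i := by
  rw [blockPrefix, blockPrefix, blockIdx_succ_of_forall_ne s hi, Fin.partialProd_succ, mul_assoc]

variable {s} (hs : StrictMono s)
include hs

lemma blockPrefix_succ_apply (j : Fin r) : blockPrefix s h (s j).succ = 1 := by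
  rw [blockPrefix, blockIdx_succ_apply hs, blockStart_succ, inv_mul_cancel]

lemma blockPrefix_castSucc_apply_mul (j : Fin r) :
    blockPrefix s h (s j).castSucc * h (s j) = groupedProd s h j := by
  rw [blockPrefix, blockIdx_castSucc_apply hs, groupedProd_eq_inv_partialProd_mul hs,
    blockStart_succ, Fin.partialProd_succ, mul_assoc]

lemma blockPrefix_mem (H : Subgroup G) (hH : ∀ i, (∀ j, s j ≠ i) → h i ∈ H) (n : Fin (l + 1)) :
    blockPrefix s h n ∈ H := by
  induction n using Fin.induction with
  | zero => simp
  | succ i ih =>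
    by_cases hi : ∃ j, s j = i
    · obtain ⟨j, rfl⟩ := hi
      simp [blockPrefix_succ_apply h hs]
    · rw [blockPrefix_succ_of_forall_ne s h (not_exists.mp hi)]
      exact mul_mem ih (hH i (not_exists.mp hi))

end BlockPrefix

section Regrouping

variable {G : Type*} [Group G] {l r : ℕ} {Kc : Subgroup G} {Kt : Fin r → Subgroup G}
  {K1 : Fin l → Subgroup G} {s : Fin r → Fin l}

lemma groupedProd_mem (hKt : ∀ j, Kc ≤ Kt j) (hs : StrictMono s) (hK1s : ∀ j, K1 (s j) = Kt j)
    (hK1o : ∀ i, (∀ j, s j ≠ i) → K1 i = Kc) (h : ∀ i, K1 i) (j : Fin r) :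
    groupedProd s (fun i => (h i : G)) j ∈ Kt j := by
  refine list_prod_mem fun x hx => ?_
  obtain ⟨i, hi, rfl⟩ := List.mem_map.mp hx
  obtain ⟨hlow, hup⟩ := of_decide_eq_true (List.mem_filter.mp hi).2
  by_cases hmark : ∃ j', s j' = i
  · obtain ⟨j', rfl⟩ := hmark
    obtain rfl : j' = j :=
      le_antisymm (hs.le_iff_le.mp hup) (not_lt.mp fun hlt => (hlow j' hlt).false)
    rw [← hK1s j']
    exact (h (s j')).2
  · exact hKt j (hK1o i (not_exists.mp hmark) ▸ (h i).2)

/-- `regroup` and `spread` are the paper's `ζ̃` and `ξ̃` on representatives. -/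
def regroup (hmem : ∀ (h : ∀ i, K1 i) j, groupedProd s (fun i => (h i : G)) j ∈ Kt j)
    (w : G × ∀ i, K1 i) : G × ∀ j, Kt j :=
  (w.1, fun j => ⟨groupedProd s (fun i => (w.2 i : G)) j, hmem w.2 j⟩)

noncomputable def spread (hs : Function.Injective s) (hK1s : ∀ j, K1 (s j) = Kt j)
    (w : G × ∀ j, Kt j) : G × ∀ i, K1 i :=
  (w.1, fun i => ⟨Function.extend s (fun j => (w.2 j : G)) (1 : Fin l → G) i, by
    by_cases hi : ∃ j, s j = i
    · obtain ⟨j, rfl⟩ := hi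
      rw [hs.extend_apply, hK1s j]
      exact (w.2 j).2
    · rw [Function.extend_apply' _ _ _ hi]
      exact one_mem _⟩)

section
variable (hs : Function.Injective s) (hK1s : ∀ j, K1 (s j) = Kt j) (w : G × ∀ j, Kt j)

lemma spread_snd_apply (j : Fin r) : ((spread hs hK1s w).2 (s j) : G) = w.2 j :=
  hs.extend_apply (fun j => (w.2 j : G)) (1 : Fin l → G) j

lemma spread_snd_of_forall_ne {i : Fin l} (hi : ∀ j, s j ≠ i) :
    ((spread hs hK1s w).2 i : G) = 1 :=
  Function.extend_apply' (fun j => (w.2 j : G)) (1 : Fin l → G) i (not_exists.mpr hi)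

end

lemma gammaRel_regroup (hs : StrictMono s)
    (hmem : ∀ (h : ∀ i, K1 i) j, groupedProd s (fun i => (h i : G)) j ∈ Kt j)
    {w w' : G × ∀ i, K1 i} (hw : gammaRel Kc K1 w w') :
    gammaRel Kc Kt (regroup hmem w) (regroup hmem w') := by
  obtain ⟨k, h0, hk⟩ := hw
  refine ⟨k ∘ blockStart s, h0, fun j => ?_⟩
  simp only [regroup, Function.comp_apply, groupedProd_eq_inv_partialProd_mul hs,
    Fin.partialProd_of_eq_inv_mul_mul (k := fun n => (k n : G)) hk]
  group

lemma gammaRel_spread (hs : StrictMono s) (hK1s : ∀ j, K1 (s j) = Kt j)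
    {w w' : G × ∀ j, Kt j} (hw : gammaRel Kc Kt w w') :
    gammaRel Kc K1 (spread hs.injective hK1s w) (spread hs.injective hK1s w') := by
  obtain ⟨k, h0, hk⟩ := hw
  refine ⟨k ∘ blockIdx s, by simpa [spread] using h0, fun i => ?_⟩
  by_cases hi : ∃ j, s j = i
  · obtain ⟨j, rfl⟩ := hi
    simp [spread_snd_apply, blockIdx_castSucc_apply hs, blockIdx_succ_apply hs, hk j]
  · simp [spread_snd_of_forall_ne _ _ _ (not_exists.mp hi),
      blockIdx_succ_of_forall_ne s (not_exists.mp hi)]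

lemma regroup_spread (hs : StrictMono s) (hK1s : ∀ j, K1 (s j) = Kt j)
    (hmem : ∀ (h : ∀ i, K1 i) j, groupedProd s (fun i => (h i : G)) j ∈ Kt j)
    (w : G × ∀ j, Kt j) : regroup hmem (spread hs.injective hK1s w) = w := by
  refine Prod.ext rfl (funext fun j => Subtype.ext ?_)
  have hprefix := blockPrefix_mem (fun i => ((spread hs.injective hK1s w).2 i : G)) hs ⊥
    (fun i hi => by rw [spread_snd_of_forall_ne _ _ _ hi]; exact one_mem _) (s j).castSucc
  rw [Subgroup.mem_bot] at hprefix
  simp only [regroup, ← blockPrefix_castSucc_apply_mul _ hs, hprefix, one_mul, spread_snd_apply]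

lemma gammaRel_spread_regroup (hs : StrictMono s) (hK1s : ∀ j, K1 (s j) = Kt j)
    (hK1o : ∀ i, (∀ j, s j ≠ i) → K1 i = Kc)
    (hmem : ∀ (h : ∀ i, K1 i) j, groupedProd s (fun i => (h i : G)) j ∈ Kt j)
    (w : G × ∀ i, K1 i) : gammaRel Kc K1 w (spread hs.injective hK1s (regroup hmem w)) := by
  set h : Fin l → G := fun i => (w.2 i : G)
  have hmemKc := blockPrefix_mem h hs Kc fun i hi => hK1o i hi ▸ (w.2 i).2
  refine ⟨fun n => ⟨(blockPrefix s h n)⁻¹, inv_mem (hmemKc n)⟩, by simp [spread, regroup],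
    fun i => ?_⟩
  by_cases hi : ∃ j, s j = i
  · obtain ⟨j, rfl⟩ := hi
    simpa [spread_snd_apply, regroup, blockPrefix_succ_apply h hs]
      using (blockPrefix_castSucc_apply_mul h hs j).symm
  · simp [spread_snd_of_forall_ne _ _ _ (not_exists.mp hi),
      blockPrefix_succ_of_forall_ne s h (not_exists.mp hi), h, mul_assoc]

end Regrouping

/-- Lemma 7.1 of the paper: the map
`ζ̃(g₀, h₁, …, h_l) = (g₀, h₁⋯h_{s₁}, h_{s₁+1}⋯h_{s₂}, …, h_{s_{r-1}+1}⋯h_{s_r})`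
is well defined (each grouped product lies in `K̃_j`) and induces a bijection
`W'_{c₁}/K_{c₁}^{l+1} → W_{c₁}/K_{c₁}^{r+1}`, with inverse induced by
`ξ̃(g₀, k̃₁, …, k̃_r) = (g₀, h₁, …, h_l)`, `h_i = k̃_j` if `i = s_j`, `h_i = e`
otherwise. -/
theorem ziller_cycle_regrouping_bijection {G : Type*} [Group G] {l r : ℕ}
    (Kc : Subgroup G) (Kt : Fin r → Subgroup G) (hKt : ∀ j, Kc ≤ Kt j)
    (s : Fin r → Fin l) (hs : StrictMono s)
    (K1 : Fin l → Subgroup G)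
    (hK1s : ∀ j, K1 (s j) = Kt j)
    (hK1o : ∀ i, (∀ j, s j ≠ i) → K1 i = Kc) :
    (∀ (h : ∀ i, K1 i) (j : Fin r),
      groupedProd s (fun i => (h i : G)) j ∈ Kt j) ∧
    ∃ (ζ : Gamma Kc K1 → Gamma Kc Kt) (ξ : Gamma Kc Kt → Gamma Kc K1),
      Function.LeftInverse ξ ζ ∧ Function.RightInverse ξ ζ ∧
      (∀ w : G × ∀ i, K1 i, ∃ w2 : G × ∀ j, Kt j,
        w2.1 = w.1 ∧
        (∀ j, (w2.2 j : G) = groupedProd s (fun i => (w.2 i : G)) j) ∧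
        ζ (Quot.mk _ w) = Quot.mk _ w2) ∧
      (∀ w : G × ∀ j, Kt j, ∃ w' : G × ∀ i, K1 i,
        w'.1 = w.1 ∧
        (∀ j, (w'.2 (s j) : G) = (w.2 j : G)) ∧
        (∀ i, (∀ j, s j ≠ i) → (w'.2 i : G) = 1) ∧
        ξ (Quot.mk _ w) = Quot.mk _ w') := by
  have hmem := groupedProd_mem hKt hs hK1s hK1o
  refine ⟨hmem, Quot.map (regroup hmem) fun _ _ => gammaRel_regroup hs hmem,
    Quot.map (spread hs.injective hK1s) fun _ _ => gammaRel_spread hs hK1s,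
    Quot.ind fun w => (Quot.sound (gammaRel_spread_regroup hs hK1s hK1o hmem w)).symm,
    Quot.ind fun w => congrArg (Quot.mk _) (regroup_spread hs hK1s hmem w),
    fun w => ⟨regroup hmem w, rfl, fun _ => rfl, rfl⟩,
    fun w => ⟨spread hs.injective hK1s w, rfl, spread_snd_apply _ _ w,
      fun _ => spread_snd_of_forall_ne _ _ w, rfl⟩⟩
end

section
/- Let γ_1 : [0,1] → M_1 and γ_2 : [0,1] → M_2 be loops (γ_j(0) = γ_j(1)). Suppose there exist 0 < t_a < 1 and 0 < t_b < 1 such that γ_1(t) ≠ γ_1(0) for all t ∈ (0, t_a] and γ_2(t) ≠ γ_2(0) for all t ∈ [t_b, 1). Define reparametrized loops φ_1(t) = γ_1(2t_a·t) for 0 ≤ t ≤ 1/2 and φ_1(t) = γ_1((2−2t_a)t + 2t_a − 1) for 1/2 ≤ t ≤ 1, and φ_2(t) = γ_2(2t_b·t) for 0 ≤ t ≤ 1/2 and φ_2(t) = γ_2((2−2t_b)t + 2t_b − 1) for 1/2 ≤ t ≤ 1. Then the product loop η(t) = (φ_1(t), φ_2(t)) in M_1 × M_2 has no nontrivial self-intersection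 with its basepoint: there is no t ∈ (0,1) with η(t) = η(0). -/
/-- The reparametrization of a loop `γ` covering `[0, t₀]` on `[0, 1/2]` and
`[t₀, 1]` on `[1/2, 1]`. -/
noncomputable def reparam {M : Type*} (t0 : ℝ) (γ : ℝ → M) : ℝ → M :=
  fun u => if u ≤ 1 / 2 then γ (2 * t0 * u) else γ ((2 - 2 * t0) * u + 2 * t0 - 1)

/-- If the loop `γ₁` has no basepoint intersection on `(0, t_a]` and the loop `γ₂`
has none on `[t_b, 1)`, then the product loop `η = (φ₁, φ₂)` of the reparametrized
loops has no nontrivial intersection with its basepoint. -/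
theorem product_of_reparametrized_loops_no_self_intersection
    {M1 M2 : Type*} (γ1 : ℝ → M1) (γ2 : ℝ → M2) (ta tb : ℝ)
    (hta : 0 < ta) (hta1 : ta < 1) (htb : 0 < tb) (htb1 : tb < 1)
    (hloop1 : γ1 0 = γ1 1) (hloop2 : γ2 0 = γ2 1)
    (h1 : ∀ t ∈ Set.Ioc (0 : ℝ) ta, γ1 t ≠ γ1 0)
    (h2 : ∀ t ∈ Set.Ico tb (1 : ℝ), γ2 t ≠ γ2 0) :
    ∀ t ∈ Set.Ioo (0 : ℝ) 1,
      (reparam ta γ1 t, reparam tb γ2 t) ≠ (reparam ta γ1 0, reparam tb γ2 0) := by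
  rintro t ⟨ht0, ht1⟩ heq
  rw [Prod.mk.injEq] at heq
  by_cases ht : t ≤ 1 / 2
  · have e1 : reparam ta γ1 t = γ1 (2 * ta * t) := if_pos ht
    have e0 : reparam ta γ1 0 = γ1 0 := by norm_num [reparam]
    refine h1 (2 * ta * t) ⟨by positivity, ?_⟩ ?_
    · nlinarith
    · rw [← e1, heq.1, e0]
  · push_neg at ht
    have e2 : reparam tb γ2 t = γ2 ((2 - 2 * tb) * t + 2 * tb - 1) :=
      if_neg (not_le.mpr ht)
    have e0 : reparam tb γ2 0 = γ2 0 := by norm_num [reparam]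
    refine h2 ((2 - 2 * tb) * t + 2 * tb - 1) ⟨by nlinarith, by nlinarith⟩ ?_
    rw [← e2, heq.2, e0]
end
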